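/- arXiv:2602.21138 — 5 statements merged into one kernel-verified Lean document; each statement's English description precedes it below -/
import Mathlib

section
/- Consider FISTA with step η = 1 and momentum β = (1−√α)/(1+√α), initialized at x_{−1} = x₀ = 0, on the over-regularized objective F_{2ρ} = f + g_B, with α ∈ (0,1). Let S be a vertex set with S_B ⊆ S, let ∂S = {j ∉ S : j has a neighbor in S} be the vertex boundary of S, let Ext(S) = V ∖ (S ∪ ∂S), and let d_min∂S = min_{j∈∂S} d_j. Assume that for every i ∈ Ext(S): |N({i}) ∩ ∂S| / d_i ≤ (αρ/(2(1−α)))² · d_i · d_min∂S, where N({i}) is the neighbor set of i. Then for all k ≥ 0 the iterates satisfy supp(x_k) ⊆ S ∪ ∂S. -/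
/-!
FISTA with momentum `(1 - √α) / (1 + √α)` on an `α`-strongly convex, `1`-smooth composite
objective has the nonincreasing potential `F x_k - F x⋆ + ‖(1 + √α) y_k - x_k - √α x⋆‖² / 2`;
started at `x₀ = y₀ = 0` it keeps every extrapolated point `y_k` in the ball of radius `4`.
If `y_k` is supported in `S ∪ ∂S`, an exterior vertex `i` has `y_k i = 0`, and its gradient
step only sees its neighbours in `∂S`.  By Cauchy–Schwarz and the no-percolation condition the
resulting value is at most `2αρ√dᵢ` in absolute value, so soft-thresholding sets `x_{k+1} i = 0`;
`y_{k+1}` then inherits the support of `x_{k+1}` and `x_k`.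
-/

open Finset

noncomputable section

/-- Degree of vertex `i` in the (unweighted) graph with adjacency matrix `A`. -/
def deg {n : ℕ} (A : Matrix (Fin n) (Fin n) ℝ) (i : Fin n) : ℝ := ∑ j, A i j

/-- The PageRank matrix `Q = αI + ((1−α)/2)·𝓛 = ((1+α)/2)·I − ((1−α)/2)·D^{-1/2} A D^{-1/2}`. -/
def Qmat {n : ℕ} (A : Matrix (Fin n) (Fin n) ℝ) (α : ℝ) : Matrix (Fin n) (Fin n) ℝ :=
  fun i j => (if i = j then (1 + α) / 2 else 0)
    - ((1 - α) / 2) * A i j / (Real.sqrt (deg A i) * Real.sqrt (deg A j))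

/-- Smooth PageRank objective `f(x) = (1/2)⟨x, Qx⟩ − α⟨D^{-1/2} e_v, x⟩` with seed vertex `v`. -/
def fPR {n : ℕ} (A : Matrix (Fin n) (Fin n) ℝ) (α : ℝ) (v : Fin n) (x : Fin n → ℝ) : ℝ :=
  (1 / 2) * (∑ i, x i * (Qmat A α).mulVec x i) - α * (x v / Real.sqrt (deg A v))

/-- Gradient of `fPR`: `∇f(x) = Qx − α·D^{-1/2} e_v`. -/
def gradf {n : ℕ} (A : Matrix (Fin n) (Fin n) ℝ) (α : ℝ) (v : Fin n) (x : Fin n → ℝ) :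
    Fin n → ℝ :=
  fun i => (Qmat A α).mulVec x i - α * (if i = v then 1 / Real.sqrt (deg A v) else 0)

/-- Weighted ℓ1 norm `‖D^{1/2} x‖₁ = ∑ i, √(d i)·|x i|`. -/
def l1w {n : ℕ} (A : Matrix (Fin n) (Fin n) ℝ) (x : Fin n → ℝ) : ℝ :=
  ∑ i, Real.sqrt (deg A i) * |x i|

/-- ℓ1-regularized PageRank objective `F_ρ(x) = f(x) + αρ‖D^{1/2}x‖₁`. -/
def Freg {n : ℕ} (A : Matrix (Fin n) (Fin n) ℝ) (α : ℝ) (v : Fin n) (ρ : ℝ)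
    (x : Fin n → ℝ) : ℝ :=
  fPR A α v x + α * ρ * l1w A x

/-- Coordinatewise soft-thresholding at levels `t·√(d i)`: this is the proximal map
`prox_{ηg}` of `g(x) = cαρ‖D^{1/2}x‖₁` with `t = η·c·α·ρ`. -/
def softT {n : ℕ} (A : Matrix (Fin n) (Fin n) ℝ) (t : ℝ) (w : Fin n → ℝ) : Fin n → ℝ :=
  fun i => Real.sign (w i) * max (|w i| - t * Real.sqrt (deg A i)) 0

/-- Euclidean norm on `Fin n → ℝ`. -/
def enorm {n : ℕ} (x : Fin n → ℝ) : ℝ := Real.sqrt (∑ i, (x i) ^ 2)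

open Classical in
/-- Degree-weighted volume of a vertex set: `vol(S) = ∑_{i ∈ S} d i`. -/
def volS {n : ℕ} (A : Matrix (Fin n) (Fin n) ℝ) (S : Set (Fin n)) : ℝ :=
  ∑ i ∈ Finset.univ.filter (fun i => i ∈ S), deg A i

/-- Neighbor set of a vertex. -/
def nbr {n : ℕ} (A : Matrix (Fin n) (Fin n) ℝ) (i : Fin n) : Set (Fin n) := {j | A i j ≠ 0}

/-- Vertex boundary of `S`: vertices outside `S` with a neighbor in `S`. -/
def bdry {n : ℕ} (A : Matrix (Fin n) (Fin n) ℝ) (S : Set (Fin n)) : Set (Fin n) :=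
  {j | j ∉ S ∧ ∃ i ∈ S, A j i ≠ 0}

/-- `A` is the adjacency matrix of a finite undirected unweighted loopless graph
with all degrees positive. -/
structure IsGraph {n : ℕ} (A : Matrix (Fin n) (Fin n) ℝ) : Prop where
  symm : ∀ i j, A i j = A j i
  zero_one : ∀ i j, A i j = 0 ∨ A i j = 1
  loopless : ∀ i, A i i = 0
  deg_pos : ∀ i, 0 < deg A i

open Matrix WithLp
open scoped RealInnerProductSpace

section Fista

variable {E : Type*} [NormedAddCommGroup E] [InnerProductSpace ℝ E]

theorem prox_grad_fundamental_ineq {f g : E → ℝ} {α : ℝ} {y p u d : E}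
    (hup : f p ≤ f y + ⟪d, p - y⟫ + ‖p - y‖ ^ 2 / 2)
    (hlow : f y + ⟪d, u - y⟫ + α / 2 * ‖u - y‖ ^ 2 ≤ f u)
    (hprox : g p + ⟪y - d - p, u - p⟫ ≤ g u) :
    f p + g p + ‖p - y‖ ^ 2 / 2 + ⟪y - p, u - y⟫ + α / 2 * ‖u - y‖ ^ 2 ≤ f u + g u := by
  have : ⟪y - d - p, u - p⟫ = ⟪y - p, u - y⟫ + ‖p - y‖ ^ 2 - ⟪d, u - y⟫ + ⟪d, p - y⟫ := by
    rw [← real_inner_self_eq_norm_sq]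
    simp only [inner_sub_left, inner_sub_right, real_inner_comm]
    ring
  linarith

def fistaPotential (F : E → ℝ) (s : ℝ) (xs x y : E) : ℝ :=
  F x - F xs + ‖(1 + s) • y - x - s • xs‖ ^ 2 / 2

variable {F : E → ℝ} {T : E → E} {s β : ℝ} {xs : E}

theorem fistaPotential_step_le (hs0 : 0 ≤ s) (hs1 : s ≤ 1)
    (hβ : (1 + s) * β = 1 - s)
    (hT : ∀ y u,
      F (T y) + ‖T y - y‖ ^ 2 / 2 + ⟪y - T y, u - y⟫ + s ^ 2 / 2 * ‖u - y‖ ^ 2 ≤ F u)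
    (hmin : ∀ z, F xs ≤ F z) (x y : E) :
    fistaPotential F s xs (T y) (T y + β • (T y - x)) ≤ fistaPotential F s xs x y := by
  have hζ : (1 + s) • (T y + β • (T y - x)) - T y = T y - x + s • x := by
    rw [smul_add, smul_smul, hβ]; module
  -- `(1 - s) * hT y x + s * hT y xs` is the potential decrease, up to this identity.
  have hcombine : ‖T y - y‖ ^ 2 / 2 + ((1 - s) * ⟪y - T y, x - y⟫ + s * ⟪y - T y, xs - y⟫)
      + s ^ 2 / 2 * ((1 - s) * ‖x - y‖ ^ 2 + s * ‖xs - y‖ ^ 2)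
      = ‖T y - x + s • x - s • xs‖ ^ 2 / 2 - (1 - s) * (‖(1 + s) • y - x - s • xs‖ ^ 2 / 2)
        + (s - s ^ 3) / 2 * ‖x - y‖ ^ 2 := by
    simp only [← real_inner_self_eq_norm_sq, inner_sub_left, inner_sub_right, inner_add_left,
      inner_add_right, real_inner_smul_right, real_inner_comm]
    ring
  have hopt := hmin x
  unfold fistaPotential
  rw [hζ]
  nlinarith [mul_le_mul_of_nonneg_left (hT y x) (sub_nonneg.2 hs1),
    mul_le_mul_of_nonneg_left (hT y xs) hs0,
    mul_nonneg (mul_nonneg hs0 (sub_nonneg.2 hs1)) (sq_nonneg ‖x - y‖),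
    mul_nonneg hs0 (sub_nonneg.2 hopt), mul_nonneg hs0 (sq_nonneg ‖(1 + s) • y - x - s • xs‖)]

variable {x y : ℕ → E}

theorem fistaPotential_le_initial (hs0 : 0 ≤ s) (hs1 : s ≤ 1) (hβ : (1 + s) * β = 1 - s)
    (hT : ∀ y u,
      F (T y) + ‖T y - y‖ ^ 2 / 2 + ⟪y - T y, u - y⟫ + s ^ 2 / 2 * ‖u - y‖ ^ 2 ≤ F u)
    (hmin : ∀ z, F xs ≤ F z) (hx : ∀ k, x (k + 1) = T (y k))
    (hy : ∀ k, y (k + 1) = x (k + 1) + β • (x (k + 1) - x k)) (k : ℕ) :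
    fistaPotential F s xs (x k) (y k) ≤ fistaPotential F s xs (x 0) (y 0) := by
  induction k with
  | zero => rfl
  | succ k ih =>
    rw [hy k, hx k]
    exact (fistaPotential_step_le hs0 hs1 hβ hT hmin (x k) (y k)).trans ih

theorem norm_fista_momentum_le_four (hs0 : 0 < s) (hs1 : s ≤ 1) (hβ : (1 + s) * β = 1 - s)
    (hT : ∀ y u,
      F (T y) + ‖T y - y‖ ^ 2 / 2 + ⟪y - T y, u - y⟫ + s ^ 2 / 2 * ‖u - y‖ ^ 2 ≤ F u)
    (hmin : ∀ z, F xs ≤ F z) (hF0 : F 0 = 0) (hF : ∀ u, s ^ 2 / 2 * ‖u‖ ^ 2 - s ^ 2 * ‖u‖ ≤ F u)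
    (hx0 : x 0 = 0) (hy0 : y 0 = 0) (hx : ∀ k, x (k + 1) = T (y k))
    (hy : ∀ k, y (k + 1) = x (k + 1) + β • (x (k + 1) - x k)) (k : ℕ) : ‖y k‖ ≤ 4 := by
  have hs2 : 0 < s ^ 2 := by positivity
  have hFxs : F xs ≤ 0 := hF0 ▸ hmin 0
  have hxs : ‖xs‖ ≤ 2 := by
    by_contra! h
    nlinarith [hF xs, mul_pos (mul_pos hs2 (by linarith : (0 : ℝ) < ‖xs‖)) (sub_pos.2 h)]
  have hΦ : fistaPotential F s xs (x k) (y k) ≤ s ^ 2 * ‖xs‖ := by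
    refine (fistaPotential_le_initial hs0.le hs1 hβ hT hmin hx hy k).trans ?_
    simp only [fistaPotential, hx0, hy0, hF0, smul_zero, sub_zero, zero_sub, norm_neg, norm_smul,
      Real.norm_eq_abs, abs_of_pos hs0]
    nlinarith [hF xs]
  unfold fistaPotential at hΦ
  have hFx := hmin (x k)
  have hζ : ‖(1 + s) • y k - x k - s • xs‖ ≤ 2 * s :=
    (sq_le_sq₀ (norm_nonneg _) (by positivity)).1 (by nlinarith)
  have hxk : ‖x k‖ ≤ 4 := by
    by_contra! h
    nlinarith [hF (x k), sq_nonneg ‖(1 + s) • y k - x k - s • xs‖,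
      mul_pos hs2 (mul_pos (sub_pos.2 h) (by linarith : (0 : ℝ) < ‖x k‖ + 2))]
  have hyk : (1 + s) * ‖y k‖ ≤ 4 * s + 4 :=
    calc (1 + s) * ‖y k‖ = ‖((1 + s) • y k - x k - s • xs) + s • xs + x k‖ := by
          rw [sub_add_cancel, sub_add_cancel, norm_smul, Real.norm_eq_abs,
            abs_of_pos (by positivity)]
      _ ≤ 2 * s + s * 2 + 4 := by
          refine (norm_add₃_le ..).trans (add_le_add (add_le_add hζ ?_) hxk)
          rw [norm_smul, Real.norm_eq_abs, abs_of_pos hs0]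
          exact mul_le_mul_of_nonneg_left hxs hs0.le
      _ = 4 * s + 4 := by ring
  nlinarith

end Fista

namespace EuclideanSpace

theorem real_inner_eq_dotProduct {ι : Type*} [Fintype ι] (a b : EuclideanSpace ℝ ι) :
    ⟪a, b⟫ = a.ofLp ⬝ᵥ b.ofLp := by
  rw [EuclideanSpace.inner_eq_star_dotProduct, star_trivial, dotProduct_comm]

theorem norm_sq_eq_dotProduct {ι : Type*} [Fintype ι] (a : EuclideanSpace ℝ ι) :
    ‖a‖ ^ 2 = a.ofLp ⬝ᵥ a.ofLp := by
  rw [← real_inner_self_eq_norm_sq, real_inner_eq_dotProduct]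

end EuclideanSpace

section PageRank

variable {n : ℕ} {A : Matrix (Fin n) (Fin n) ℝ}

theorem abs_dotProduct_mulVec_le_sum_deg (hA : ∀ i j, 0 ≤ A i j) (hsymm : ∀ i j, A i j = A j i)
    (w : Fin n → ℝ) :
    |w ⬝ᵥ A *ᵥ w| ≤ ∑ i, deg A i * w i ^ 2 := by
  have hterm : ∀ i j, |w i * (A i j * w j)| ≤ A i j * w i ^ 2 / 2 + A i j * w j ^ 2 / 2 := by
    intro i j
    rw [abs_mul, abs_mul, abs_of_nonneg (hA i j), ← sq_abs (w i), ← sq_abs (w j)]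
    nlinarith [mul_nonneg (hA i j) (sq_nonneg (|w i| - |w j|))]
  calc |w ⬝ᵥ A *ᵥ w| = |∑ i, ∑ j, w i * (A i j * w j)| := by
        simp only [dotProduct, Matrix.mulVec, mul_sum]
    _ ≤ ∑ i, ∑ j, (A i j * w i ^ 2 / 2 + A i j * w j ^ 2 / 2) :=
        (abs_sum_le_sum_abs _ _).trans <| sum_le_sum fun i _ =>
          (abs_sum_le_sum_abs _ _).trans <| sum_le_sum fun j _ => hterm i j
    _ = ∑ i, deg A i * w i ^ 2 := by
        have hrow : ∑ i, ∑ j, A i j * w i ^ 2 / 2 = ∑ i, deg A i * w i ^ 2 / 2 := by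
          simp only [deg, sum_mul, sum_div]
        have hcol : ∑ i, ∑ j, A i j * w j ^ 2 / 2 = ∑ i, deg A i * w i ^ 2 / 2 := by
          rw [sum_comm, ← hrow]
          exact sum_congr rfl fun i _ => sum_congr rfl fun j _ => by rw [hsymm]
        rw [sum_congr rfl fun i _ => sum_add_distrib, sum_add_distrib, hrow, hcol,
          ← sum_add_distrib]
        exact sum_congr rfl fun i _ => by ring

theorem IsGraph.nonneg (hG : IsGraph A) (i j : Fin n) : 0 ≤ A i j := by
  rcases hG.zero_one i j with h | h <;> simp [h]

theorem IsGraph.one_le_deg (hG : IsGraph A) (i : Fin n) : 1 ≤ deg A i := by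
  obtain ⟨j, -, hj⟩ := exists_ne_zero_of_sum_ne_zero (hG.deg_pos i).ne'
  calc (1 : ℝ) = A i j := ((hG.zero_one i j).resolve_left hj).symm
    _ ≤ deg A i := single_le_sum (fun k _ => hG.nonneg i k) (mem_univ j)

theorem Qmat_mulVec_apply (α : ℝ) (u : Fin n → ℝ) (i : Fin n) :
    (Qmat A α *ᵥ u) i = (1 + α) / 2 * u i
      - (1 - α) / 2 * ∑ j, A i j * u j / (√(deg A i) * √(deg A j)) := by
  simp only [mulVec, dotProduct, Qmat, sub_mul, sum_sub_distrib, ite_mul, zero_mul, sum_ite_eq,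
    mem_univ, if_true, mul_sum]
  congr 1
  exact sum_congr rfl fun j _ => by ring

theorem dotProduct_Qmat_mulVec (α : ℝ) (u : Fin n → ℝ) :
    u ⬝ᵥ Qmat A α *ᵥ u = (1 + α) / 2 * (u ⬝ᵥ u)
      - (1 - α) / 2 * ((fun i => u i / √(deg A i)) ⬝ᵥ A *ᵥ fun i => u i / √(deg A i)) := by
  simp only [dotProduct, Qmat_mulVec_apply]
  simp only [mulVec, dotProduct, mul_sub, mul_sum, sum_sub_distrib]
  congr 1
  · exact sum_congr rfl fun i _ => by ring
  · exact sum_congr rfl fun i _ => sum_congr rfl fun j _ => by ring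

theorem IsGraph.sum_deg_mul_sq_div (hG : IsGraph A) (u : Fin n → ℝ) :
    ∑ i, deg A i * (u i / √(deg A i)) ^ 2 = u ⬝ᵥ u :=
  sum_congr rfl fun i _ => by
    rw [div_pow, Real.sq_sqrt (hG.deg_pos i).le, mul_div_cancel₀ _ (hG.deg_pos i).ne', sq]

theorem IsGraph.dotProduct_Qmat_mulVec_le (hG : IsGraph A) {α : ℝ} (hα1 : α ≤ 1)
    (u : Fin n → ℝ) : u ⬝ᵥ Qmat A α *ᵥ u ≤ u ⬝ᵥ u := by
  have := abs_dotProduct_mulVec_le_sum_deg hG.nonneg hG.symm fun i => u i / √(deg A i)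
  rw [dotProduct_Qmat_mulVec, ← hG.sum_deg_mul_sq_div u]
  nlinarith [neg_abs_le ((fun i => u i / √(deg A i)) ⬝ᵥ A *ᵥ fun i => u i / √(deg A i))]

theorem IsGraph.le_dotProduct_Qmat_mulVec (hG : IsGraph A) {α : ℝ} (hα1 : α ≤ 1)
    (u : Fin n → ℝ) : α * (u ⬝ᵥ u) ≤ u ⬝ᵥ Qmat A α *ᵥ u := by
  have := abs_dotProduct_mulVec_le_sum_deg hG.nonneg hG.symm fun i => u i / √(deg A i)
  rw [dotProduct_Qmat_mulVec, ← hG.sum_deg_mul_sq_div u]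
  nlinarith [le_abs_self ((fun i => u i / √(deg A i)) ⬝ᵥ A *ᵥ fun i => u i / √(deg A i))]

theorem IsGraph.Qmat_transpose (hG : IsGraph A) (α : ℝ) : (Qmat A α)ᵀ = Qmat A α := by
  ext i j
  simp only [transpose_apply, Qmat, hG.symm j i, eq_comm (a := j), mul_comm √(deg A j)]

theorem IsGraph.fPR_eq_add (hG : IsGraph A) (α : ℝ) (v : Fin n) (y p : Fin n → ℝ) :
    fPR A α v p = fPR A α v y + (p - y) ⬝ᵥ gradf A α v y
      + (p - y) ⬝ᵥ Qmat A α *ᵥ (p - y) / 2 := by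
  have hsymm : y ⬝ᵥ Qmat A α *ᵥ p = p ⬝ᵥ Qmat A α *ᵥ y := by
    rw [dotProduct_mulVec, ← hG.Qmat_transpose α, vecMul_transpose, dotProduct_comm,
      hG.Qmat_transpose]
  have hlin : (p - y) ⬝ᵥ (fun i => α * if i = v then 1 / √(deg A v) else 0)
      = α * (p v / √(deg A v)) - α * (y v / √(deg A v)) := by
    simp only [dotProduct, mul_ite, mul_zero, sum_ite_eq', mem_univ, if_true, Pi.sub_apply]
    ring
  have hgrad : gradf A α v y = Qmat A α *ᵥ y - fun i => α * if i = v then 1 / √(deg A v) else 0 :=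
    rfl
  have hf : ∀ x, fPR A α v x = x ⬝ᵥ Qmat A α *ᵥ x / 2 - α * (x v / √(deg A v)) := fun x => by
    simp only [fPR, dotProduct]; ring
  rw [hf, hf, hgrad, dotProduct_sub, hlin]
  simp only [mulVec_sub, sub_dotProduct, dotProduct_sub]
  rw [hsymm]
  ring

theorem IsGraph.fPR_le (hG : IsGraph A) {α : ℝ} (hα1 : α ≤ 1) (v : Fin n)
    (y p : EuclideanSpace ℝ (Fin n)) :
    fPR A α v p ≤ fPR A α v y + ⟪toLp 2 (gradf A α v y), p - y⟫ + ‖p - y‖ ^ 2 / 2 := by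
  rw [hG.fPR_eq_add α v y p, EuclideanSpace.real_inner_eq_dotProduct,
    EuclideanSpace.norm_sq_eq_dotProduct, dotProduct_comm]
  have := hG.dotProduct_Qmat_mulVec_le hα1 (p - y)
  simp only [ofLp_sub] at this ⊢
  linarith

theorem IsGraph.le_fPR (hG : IsGraph A) {α : ℝ} (hα1 : α ≤ 1) (v : Fin n)
    (y u : EuclideanSpace ℝ (Fin n)) :
    fPR A α v y + ⟪toLp 2 (gradf A α v y), u - y⟫ + α / 2 * ‖u - y‖ ^ 2 ≤ fPR A α v u := by
  rw [hG.fPR_eq_add α v y u, EuclideanSpace.real_inner_eq_dotProduct,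
    EuclideanSpace.norm_sq_eq_dotProduct, dotProduct_comm]
  have := hG.le_dotProduct_Qmat_mulVec hα1 (u - y)
  simp only [ofLp_sub] at this ⊢
  linarith

theorem soft_threshold_prox_ineq {τ : ℝ} (hτ : 0 ≤ τ) (w u : ℝ) :
    τ * |Real.sign w * max (|w| - τ) 0|
      + (w - Real.sign w * max (|w| - τ) 0) * (u - Real.sign w * max (|w| - τ) 0) ≤ τ * |u| := by
  set p := Real.sign w * max (|w| - τ) 0
  -- `w - p` is a subgradient of `τ * |·|` at `p`.
  obtain ⟨hres, hdual⟩ : |w - p| ≤ τ ∧ (w - p) * p = τ * |p| := by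
    rcases le_or_gt |w| τ with h | h
    · simp [p, h]
    rcases lt_or_gt_of_ne (show w ≠ 0 by rintro rfl; simp at h; linarith) with hw | hw
    · rw [abs_of_neg hw] at h
      simp only [p, Real.sign_of_neg hw, abs_of_neg hw, max_eq_left (by linarith : 0 ≤ -w - τ)]
      rw [abs_of_nonpos (by linarith : -1 * (-w - τ) ≤ 0)]
      constructor
      · rw [abs_le]; constructor <;> linarith
      · ring
    · rw [abs_of_pos hw] at h
      simp only [p, Real.sign_of_pos hw, abs_of_pos hw, max_eq_left (by linarith : 0 ≤ w - τ)]
      rw [abs_of_nonneg (by linarith : 0 ≤ 1 * (w - τ))]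
      constructor
      · rw [abs_le]; constructor <;> linarith
      · ring
  calc τ * |p| + (w - p) * (u - p) = (w - p) * u := by rw [mul_sub, hdual]; ring
    _ ≤ |w - p| * |u| := (le_abs_self _).trans (abs_mul _ _).le
    _ ≤ τ * |u| := mul_le_mul_of_nonneg_right hres (abs_nonneg u)

theorem softT_prox_ineq {t : ℝ} (ht : 0 ≤ t) (w u : Fin n → ℝ) :
    t * l1w A (softT A t w) + (w - softT A t w) ⬝ᵥ (u - softT A t w) ≤ t * l1w A u := by
  simp only [l1w, dotProduct, mul_sum, ← sum_add_distrib]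
  refine sum_le_sum fun i _ => ?_
  have := soft_threshold_prox_ineq (mul_nonneg ht (Real.sqrt_nonneg (deg A i))) (w i) (u i)
  simp only [softT, Pi.sub_apply]
  linarith

def proxGradStep (A : Matrix (Fin n) (Fin n) ℝ) (α t : ℝ) (v : Fin n) (y : Fin n → ℝ) :
    Fin n → ℝ :=
  softT A t fun i => y i - gradf A α v y i

theorem IsGraph.Freg_proxGradStep_le (hG : IsGraph A) {α ρ : ℝ} (hα1 : α ≤ 1) (ht : 0 ≤ α * ρ)
    (v : Fin n) (y u : EuclideanSpace ℝ (Fin n)) :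
    Freg A α v ρ (proxGradStep A α (α * ρ) v y)
      + ‖toLp 2 (proxGradStep A α (α * ρ) v y) - y‖ ^ 2 / 2
      + ⟪y - toLp 2 (proxGradStep A α (α * ρ) v y), u - y⟫ + α / 2 * ‖u - y‖ ^ 2
      ≤ Freg A α v ρ u := by
  set p : EuclideanSpace ℝ (Fin n) := toLp 2 (proxGradStep A α (α * ρ) v y)
  have hprox : α * ρ * l1w A p + ⟪y - toLp 2 (gradf A α v y) - p, u - p⟫ ≤ α * ρ * l1w A u := by
    rw [EuclideanSpace.real_inner_eq_dotProduct]
    exact softT_prox_ineq ht _ u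
  have := prox_grad_fundamental_ineq (E := EuclideanSpace ℝ (Fin n))
    (f := fun z => fPR A α v z) (g := fun z => α * ρ * l1w A z)
    (hG.fPR_le hα1 v y p) (hG.le_fPR hα1 v y u) hprox
  rw [Freg, Freg]
  linarith

theorem IsGraph.le_Freg (hG : IsGraph A) {α ρ : ℝ} (hα : 0 ≤ α) (hα1 : α ≤ 1) (hρ : 0 ≤ ρ)
    (v : Fin n) (u : EuclideanSpace ℝ (Fin n)) : α / 2 * ‖u‖ ^ 2 - α * ‖u‖ ≤ Freg A α v ρ u := by
  have hquad := hG.le_dotProduct_Qmat_mulVec hα1 u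
  have hseed : u v / √(deg A v) ≤ ‖u‖ :=
    calc u v / √(deg A v) ≤ |u v| := by
          rw [div_le_iff₀ (Real.sqrt_pos.2 (hG.deg_pos v))]
          nlinarith [le_abs_self (u v), abs_nonneg (u v),
            Real.one_le_sqrt.2 (hG.one_le_deg v)]
      _ ≤ ‖u‖ := PiLp.norm_apply_le u v
  have hl1 : 0 ≤ l1w A u := sum_nonneg fun i _ => by positivity
  rw [EuclideanSpace.norm_sq_eq_dotProduct]
  simp only [Freg, fPR]
  change α / 2 * (u.ofLp ⬝ᵥ u.ofLp) - α * ‖u‖ ≤ 1 / 2 * (u.ofLp ⬝ᵥ Qmat A α *ᵥ u.ofLp) - _ + _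
  nlinarith [mul_le_mul_of_nonneg_left hseed hα, mul_nonneg (mul_nonneg hα hρ) hl1]

theorem Freg_zero (α ρ : ℝ) (v : Fin n) : Freg A α v ρ 0 = 0 := by
  simp [Freg, fPR, l1w]

theorem IsGraph.norm_fista_le_four (hG : IsGraph A) {α ρ : ℝ} (hα : 0 < α) (hα1 : α < 1)
    (hρ : 0 ≤ ρ) {v : Fin n} {xB : Fin n → ℝ}
    (hxB : ∀ z, Freg A α v (2 * ρ) xB ≤ Freg A α v (2 * ρ) z) {x y : ℕ → Fin n → ℝ} {β : ℝ}
    (hβ : β = (1 - √α) / (1 + √α)) (hx0 : x 0 = 0) (hy0 : y 0 = 0)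
    (hxs : ∀ k, x (k + 1) = proxGradStep A α (2 * α * ρ) v (y k))
    (hys : ∀ k, y (k + 1) = fun i => x (k + 1) i + β * (x (k + 1) i - x k i)) (k : ℕ) :
    ‖toLp 2 (y k)‖ ≤ 4 := by
  have hsα : √α ^ 2 = α := Real.sq_sqrt hα.le
  refine norm_fista_momentum_le_four (xs := toLp 2 xB) (β := β) (x := fun k => toLp 2 (x k))
    (F := fun z : EuclideanSpace ℝ (Fin n) => Freg A α v (2 * ρ) z)
    (T := fun z => toLp 2 (proxGradStep A α (2 * α * ρ) v z)) (Real.sqrt_pos.2 hα)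
    (Real.sqrt_le_one.2 hα1.le) (by rw [hβ]; field_simp) (fun y u => ?_) (fun z => hxB z)
    (Freg_zero α _ v) (fun u => ?_) (congrArg (toLp 2) hx0) (congrArg (toLp 2) hy0)
    (fun k => congrArg (toLp 2) (hxs k)) (fun k => congrArg (toLp 2) (hys k)) k
  · rw [hsα, show 2 * α * ρ = α * (2 * ρ) by ring]
    exact hG.Freg_proxGradStep_le hα1.le (by positivity) v y u
  · rw [hsα]
    exact hG.le_Freg hα.le hα1.le (by positivity) v u

theorem sum_inv_le_of_card_le_mul_sInf {ι : Type*} [Finite ι] {f : ι → ℝ} (hf : ∀ j, 0 < f j)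
    {B : Set ι} {T : Finset ι} (hTB : ↑T ⊆ B) {c : ℝ} (hc0 : 0 ≤ c)
    (hc : (#T : ℝ) ≤ c * sInf (f '' B)) : ∑ j ∈ T, (f j)⁻¹ ≤ c := by
  obtain rfl | ⟨j₀, hj₀⟩ := T.eq_empty_or_nonempty
  · simpa using hc0
  obtain ⟨j₁, -, hj₁⟩ : sInf (f '' B) ∈ f '' B :=
    Set.Nonempty.csInf_mem ⟨f j₀, j₀, hTB hj₀, rfl⟩ (Set.toFinite _)
  have hm : 0 < sInf (f '' B) := hj₁ ▸ hf j₁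
  calc ∑ j ∈ T, (f j)⁻¹ ≤ #T • (sInf (f '' B))⁻¹ :=
        sum_le_card_nsmul _ _ _ fun j hj => inv_anti₀ hm <|
          csInf_le (Set.toFinite _).bddBelow ⟨j, hTB hj, rfl⟩
    _ ≤ c * sInf (f '' B) * (sInf (f '' B))⁻¹ := by
        rw [nsmul_eq_mul]; exact mul_le_mul_of_nonneg_right hc (inv_nonneg.2 hm.le)
    _ = c := by field_simp

theorem softT_apply_eq_zero {t : ℝ} {w : Fin n → ℝ} {i : Fin n} (h : |w i| ≤ t * √(deg A i)) :
    softT A t w i = 0 := by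
  simp [softT, max_eq_right (sub_nonpos.2 h)]

theorem sub_gradf_apply_of_ne {α : ℝ} {v i : Fin n} (hi : i ≠ v) {y : Fin n → ℝ} (hy : y i = 0) :
    y i - gradf A α v y i = (1 - α) / 2 * ∑ j, A i j * y j / (√(deg A i) * √(deg A j)) := by
  simp only [gradf, Qmat_mulVec_apply, hi, if_false, hy]
  ring

open Classical in
theorem IsGraph.sum_adj_eq_sum_bdry (hG : IsGraph A) {S : Set (Fin n)} {y : Fin n → ℝ}
    (hy : Function.support y ⊆ S ∪ bdry A S) {i : Fin n} (hi : i ∉ S ∪ bdry A S) :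
    ∑ j, A i j * y j / (√(deg A i) * √(deg A j))
      = (∑ j ∈ (nbr A i ∩ bdry A S).toFinset, y j / √(deg A j)) / √(deg A i) := by
  rw [sum_div, ← sum_subset (subset_univ _)]
  · refine sum_congr rfl fun j hj => ?_
    rw [Set.mem_toFinset] at hj
    rw [(hG.zero_one i j).resolve_left hj.1, div_div, one_mul, mul_comm]
  · intro j _ hj
    rw [Set.mem_toFinset] at hj
    by_cases hA : A i j = 0
    · simp [hA]
    have hjS : j ∉ S := fun hjS => hi (Or.inr ⟨fun hiS => hi (Or.inl hiS), j, hjS, hA⟩)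
    have hjB : j ∉ bdry A S := fun hjB => hj ⟨hA, hjB⟩
    have : y j = 0 := Function.notMem_support.1 fun h => (hy h).elim hjS hjB
    simp [this]

-- The constant of the no-percolation condition is tuned to the bound `8` on `‖y‖`:
-- `(1 - α) / 2 * 8 * (α * ρ / (2 * (1 - α))) = 2 * α * ρ` is the thresholding level.
theorem IsGraph.proxGradStep_apply_eq_zero (hG : IsGraph A) {α ρ : ℝ} (hα : 0 ≤ α) (hα1 : α < 1)
    (hρ : 0 ≤ ρ) {v : Fin n} {S : Set (Fin n)} (hv : v ∈ S) {y : Fin n → ℝ}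
    (hy : ‖toLp 2 y‖ ≤ 8) (hsupp : Function.support y ⊆ S ∪ bdry A S) {i : Fin n}
    (hi : i ∉ S ∪ bdry A S)
    (hperc : ((nbr A i ∩ bdry A S).ncard : ℝ) / deg A i ≤
      (α * ρ / (2 * (1 - α))) ^ 2 * deg A i * sInf (deg A '' bdry A S)) :
    proxGradStep A α (2 * α * ρ) v y i = 0 := by
  classical
  set C := α * ρ / (2 * (1 - α))
  set T := (nbr A i ∩ bdry A S).toFinset
  have hdi := hG.deg_pos i
  have hC : 0 ≤ C := div_nonneg (mul_nonneg hα hρ) (by linarith)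
  have hyi : y i = 0 := Function.notMem_support.1 fun h => hi (hsupp h)
  have hiv : i ≠ v := fun h => hi (Or.inl (h ▸ hv))
  have hinv : ∑ j ∈ T, (deg A j)⁻¹ ≤ (C * deg A i) ^ 2 := by
    refine sum_inv_le_of_card_le_mul_sInf hG.deg_pos (B := bdry A S) (by simp [T])
      (by positivity) ?_
    rw [Set.ncard_eq_toFinset_card', div_le_iff₀ hdi] at hperc
    linarith
  have hsq : (∑ j ∈ T, y j / √(deg A j)) ^ 2 ≤ (8 * (C * deg A i)) ^ 2 := by
    have hy2 : ∑ j ∈ T, y j ^ 2 ≤ 8 ^ 2 := by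
      refine (sum_le_sum_of_subset_of_nonneg (subset_univ T) fun j _ _ => sq_nonneg _).trans ?_
      rw [← EuclideanSpace.real_norm_sq_eq]
      exact pow_le_pow_left₀ (norm_nonneg _) hy 2
    calc (∑ j ∈ T, y j / √(deg A j)) ^ 2
        ≤ (∑ j ∈ T, y j ^ 2) * ∑ j ∈ T, (1 / √(deg A j)) ^ 2 := by
          simpa only [mul_one_div] using sum_mul_sq_le_sq_mul_sq T y fun j => 1 / √(deg A j)
      _ = (∑ j ∈ T, y j ^ 2) * ∑ j ∈ T, (deg A j)⁻¹ := by
          congr 1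
          exact sum_congr rfl fun j _ => by
            rw [div_pow, one_pow, Real.sq_sqrt (hG.deg_pos j).le, one_div]
      _ ≤ 8 ^ 2 * (C * deg A i) ^ 2 :=
          mul_le_mul hy2 hinv (sum_nonneg fun j _ => inv_nonneg.2 (hG.deg_pos j).le)
            (by norm_num)
      _ = (8 * (C * deg A i)) ^ 2 := by ring
  have habs := abs_le_of_sq_le_sq hsq (by positivity)
  apply softT_apply_eq_zero
  rw [sub_gradf_apply_of_ne hiv hyi, hG.sum_adj_eq_sum_bdry hsupp hi, abs_mul,
    abs_of_pos (by linarith : (0 : ℝ) < (1 - α) / 2), abs_div, abs_of_pos (Real.sqrt_pos.2 hdi)]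
  calc (1 - α) / 2 * (|∑ j ∈ T, y j / √(deg A j)| / √(deg A i))
      ≤ (1 - α) / 2 * (8 * (C * deg A i) / √(deg A i)) := by gcongr
    _ = 4 * ((1 - α) * C) * (deg A i / √(deg A i)) := by ring
    _ = 2 * α * ρ * √(deg A i) := by
        have hC2 : (1 - α) * C = α * ρ / 2 := by
          simp only [C]; field_simp [(sub_pos.2 hα1).ne']
        rw [Real.div_sqrt, hC2]
        ring

theorem IsGraph.support_proxGradStep_subset (hG : IsGraph A) {α ρ : ℝ} (hα : 0 ≤ α)
    (hα1 : α < 1) (hρ : 0 ≤ ρ) {v : Fin n} {S : Set (Fin n)} (hv : v ∈ S) {y : Fin n → ℝ}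
    (hy : ‖toLp 2 y‖ ≤ 8) (hsupp : Function.support y ⊆ S ∪ bdry A S)
    (hperc : ∀ i, i ∉ S ∪ bdry A S → ((nbr A i ∩ bdry A S).ncard : ℝ) / deg A i ≤
      (α * ρ / (2 * (1 - α))) ^ 2 * deg A i * sInf (deg A '' bdry A S)) :
    Function.support (proxGradStep A α (2 * α * ρ) v y) ⊆ S ∪ bdry A S := fun i hi => by
  by_contra hiU
  exact hi (hG.proxGradStep_apply_eq_zero hα hα1 hρ hv hy hsupp hiU (hperc i hiU))

theorem support_add_mul_sub_subset (a b : Fin n → ℝ) (β : ℝ) :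
    Function.support (fun i => a i + β * (a i - b i))
      ⊆ Function.support a ∪ Function.support b := fun i hi => by
  by_contra h
  simp only [Set.mem_union, Function.mem_support, not_or, not_not] at h
  simp [h.1, h.2] at hi

end PageRank

theorem fista_boundary_confinement_general
    {n : ℕ} (A : Matrix (Fin n) (Fin n) ℝ) (hG : IsGraph A)
    (α ρ : ℝ) (hα : 0 < α) (hα1 : α < 1) (hρ : 0 < ρ) (v : Fin n)
    (xB : Fin n → ℝ)
    (hxB : ∀ z, Freg A α v (2 * ρ) xB ≤ Freg A α v (2 * ρ) z)
    (x y : ℕ → Fin n → ℝ) (β : ℝ)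
    (hβ : β = (1 - Real.sqrt α) / (1 + Real.sqrt α))
    (hx0 : x 0 = 0) (hy0 : y 0 = 0)
    (hxs : ∀ k, x (k + 1) = softT A (2 * α * ρ) (fun i => y k i - gradf A α v (y k) i))
    (hys : ∀ k, y (k + 1) = fun i => x (k + 1) i + β * (x (k + 1) i - x k i))
    (S : Set (Fin n))
    (hseed : v ∈ S)
    -- no-percolation condition on exterior vertices, with d_min∂S = inf of degrees on ∂S
    (hexp : ∀ i : Fin n, i ∉ S ∪ bdry A S →
      ((nbr A i ∩ bdry A S).ncard : ℝ) / deg A i ≤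
        (α * ρ / (2 * (1 - α))) ^ 2 * deg A i * sInf (deg A '' bdry A S)) :
    ∀ k : ℕ, Function.support (x k) ⊆ S ∪ bdry A S := by
  have hy := hG.norm_fista_le_four hα hα1 hρ.le hxB hβ hx0 hy0 hxs hys
  have hconf : ∀ k, Function.support (x k) ⊆ S ∪ bdry A S ∧
      Function.support (y k) ⊆ S ∪ bdry A S := by
    intro k
    induction k with
    | zero => simp [hx0, hy0]
    | succ k ih =>
      have hxk : Function.support (x (k + 1)) ⊆ S ∪ bdry A S := hxs k ▸
        hG.support_proxGradStep_subset hα.le hα1 hρ.le hseed (by linarith [hy k]) ih.2 hexp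
      exact ⟨hxk, hys k ▸ (support_add_mul_sub_subset _ _ β).trans (Set.union_subset hxk ih.1)⟩
  exact fun k => (hconf k).1

/-- Boundary confinement under a no-percolation condition: running FISTA
(η = 1, β = (1−√α)/(1+√α), x₋₁ = x₀ = 0) on `F_{2ρ} = f + g_B` with `α ∈ (0,1)`, if
`S ⊇ S_B` (and `S` contains the seed) and every exterior vertex `i` satisfies
`|N({i}) ∩ ∂S| / d_i ≤ (αρ/(2(1−α)))²·d_i·d_min∂S`, then `supp(x_k) ⊆ S ∪ ∂S` for all `k`. -/
theorem fista_boundary_confinement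
    {n : ℕ} (A : Matrix (Fin n) (Fin n) ℝ) (hG : IsGraph A)
    (α ρ : ℝ) (hα : 0 < α) (hα1 : α < 1) (hρ : 0 < ρ) (v : Fin n)
    (xB : Fin n → ℝ)
    (hxB : ∀ z, Freg A α v (2 * ρ) xB ≤ Freg A α v (2 * ρ) z)
    (x y : ℕ → Fin n → ℝ) (β : ℝ)
    (hβ : β = (1 - Real.sqrt α) / (1 + Real.sqrt α))
    (hx0 : x 0 = 0) (hy0 : y 0 = 0)
    (hxs : ∀ k, x (k + 1) = softT A (2 * α * ρ) (fun i => y k i - gradf A α v (y k) i))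
    (hys : ∀ k, y (k + 1) = fun i => x (k + 1) i + β * (x (k + 1) i - x k i))
    (S : Set (Fin n))
    (hSB : Function.support xB ⊆ S)
    (hseed : v ∈ S)
    -- no-percolation condition on exterior vertices, with d_min∂S = inf of degrees on ∂S
    (hexp : ∀ i : Fin n, i ∉ S ∪ bdry A S →
      ((nbr A i ∩ bdry A S).ncard : ℝ) / deg A i ≤
        (α * ρ / (2 * (1 - α))) ^ 2 * deg A i * sInf (deg A '' bdry A S)) :
    ∀ k : ℕ, Function.support (x k) ⊆ S ∪ bdry A S :=
  fista_boundary_confinement_general A hG α ρ hα hα1 hρ v xB hxB x y β hβ hx0 hy0 hxs hys S hseed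
    hexp
end
end

section
/- For i ∈ I_B define the problem-(B) margin γ_i^{(B)} = 2ρα + ∇_i f(x_B⋆)/√d_i, and define I_B^small = {i ∈ I_B : γ_i^{(B)} < ρα} and I_B^large = {i ∈ I_B : γ_i^{(B)} ≥ ρα}. Then I_B^small ⊆ S_A, i.e., every inactive coordinate of problem (B) whose margin is below ρα belongs to the support of the problem-(A) minimizer. -/
open Finset

noncomputable section

/-- Two-tier split: for `i ∈ I_B` define the problem-(B) margin
`γ_i^{(B)} = 2ρα + ∇_i f(x_B⋆)/√d_i`. Every inactive coordinate of problem (B) whose margin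
is below `ρα` belongs to the support `S_A` of the problem-(A) minimizer. -/
theorem small_margin_in_support_A
    {n : ℕ} (A : Matrix (Fin n) (Fin n) ℝ) (hG : IsGraph A)
    (α ρ : ℝ) (hα : 0 < α) (hα1 : α ≤ 1) (hρ : 0 < ρ) (v : Fin n)
    (xA xB : Fin n → ℝ)
    (hxA : ∀ z, Freg A α v ρ xA ≤ Freg A α v ρ z)
    (hxB : ∀ z, Freg A α v (2 * ρ) xB ≤ Freg A α v (2 * ρ) z)
    -- context facts: minimizers are nonnegative and the solution path is monotone
    (hAnn : ∀ j, 0 ≤ xA j) (hBnn : ∀ j, 0 ≤ xB j) (hmono : ∀ j, xB j ≤ xA j) :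
    ∀ i : Fin n, xB i = 0 →
      2 * ρ * α + gradf A α v xB i / Real.sqrt (deg A i) < ρ * α →
      xA i ≠ 0 := by
  intro i hBi hmargin hA0
  -- basic facts
  have hdi : 0 < Real.sqrt (deg A i) := Real.sqrt_pos.mpr (hG.deg_pos i)
  have hQsym : ∀ a b, Qmat A α a b = Qmat A α b a := by
    intro a b
    unfold Qmat
    rw [hG.symm a b]
    by_cases h : a = b
    · subst h; ring
    · rw [if_neg h, if_neg (Ne.symm h)]; ring
  have hQii : Qmat A α i i = (1 + α) / 2 := by
    simp [Qmat, hG.loopless i]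
  -- off-diagonal entries of Q are nonpositive
  have hQoff : ∀ j, j ≠ i → Qmat A α i j ≤ 0 := by
    intro j hj
    unfold Qmat
    rw [if_neg (Ne.symm hj)]
    have h1 : 0 ≤ (1 - α) / 2 := by linarith
    have h2 : 0 ≤ A i j := by rcases hG.zero_one i j with h | h <;> rw [h] <;> norm_num
    have h3 : 0 ≤ Real.sqrt (deg A i) * Real.sqrt (deg A j) :=
      mul_nonneg (Real.sqrt_nonneg _) (Real.sqrt_nonneg _)
    have := div_nonneg (mul_nonneg h1 h2) h3
    linarith
  -- gradient monotonicity
  have hgrad_le : gradf A α v xA i ≤ gradf A α v xB i := by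
    unfold gradf
    have hmv : (Qmat A α).mulVec xA i - (Qmat A α).mulVec xB i
        = ∑ j, Qmat A α i j * (xA j - xB j) := by
      simp [Matrix.mulVec, dotProduct, mul_sub, Finset.sum_sub_distrib]
    have hsum : ∑ j, Qmat A α i j * (xA j - xB j) ≤ 0 := by
      apply Finset.sum_nonpos
      intro j _
      by_cases hj : j = i
      · subst hj; rw [hA0, hBi]; simp
      · exact mul_nonpos_of_nonpos_of_nonneg (hQoff j hj) (by linarith [hmono j])
    linarith [hmv ▸ hsum]
  -- margin hypothesis rewritten
  have hB_lt : gradf A α v xB i < -(ρ * α) * Real.sqrt (deg A i) := by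
    have h1 : gradf A α v xB i / Real.sqrt (deg A i) < -(ρ * α) := by linarith
    calc gradf A α v xB i
        = gradf A α v xB i / Real.sqrt (deg A i) * Real.sqrt (deg A i) := by
          field_simp
      _ < -(ρ * α) * Real.sqrt (deg A i) := mul_lt_mul_of_pos_right h1 hdi
  -- c := gradf xA i + αρ√d_i < 0
  obtain ⟨c, hc_def⟩ : ∃ c : ℝ, c = gradf A α v xA i + α * ρ * Real.sqrt (deg A i) := ⟨_, rfl⟩
  have hc_neg : c < 0 := by
    have : gradf A α v xA i < -(ρ * α) * Real.sqrt (deg A i) := lt_of_le_of_lt hgrad_le hB_lt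
    nlinarith
  -- perturbation direction
  obtain ⟨t, ht_def⟩ : ∃ t : ℝ, t = -c := ⟨_, rfl⟩
  have ht_pos : 0 < t := by rw [ht_def]; linarith
  obtain ⟨z, hz⟩ : ∃ z : Fin n → ℝ, z = fun j => xA j + (if j = i then t else 0) := ⟨_, rfl⟩
  have hzk : ∀ k, z k = xA k + (if k = i then t else 0) := fun k => by rw [hz]
  -- mulVec expansion
  have hmv : ∀ k, (Qmat A α).mulVec z k = (Qmat A α).mulVec xA k + t * Qmat A α k i := by
    intro k
    simp only [Matrix.mulVec, dotProduct, hz, mul_add, Finset.sum_add_distrib,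
      mul_ite, mul_zero, Finset.sum_ite_eq', Finset.mem_univ, if_true]
    ring
  have hsym_sum : ∑ k, xA k * Qmat A α k i = (Qmat A α).mulVec xA i := by
    simp only [Matrix.mulVec, dotProduct]
    exact Finset.sum_congr rfl (fun k _ => by rw [hQsym k i]; ring)
  -- quadratic form expansion
  have hquad : ∑ k, z k * (Qmat A α).mulVec z k
      = (∑ k, xA k * (Qmat A α).mulVec xA k)
        + 2 * t * (Qmat A α).mulVec xA i + t ^ 2 * Qmat A α i i := by
    have hterm : ∀ k, z k * (Qmat A α).mulVec z k
        = xA k * (Qmat A α).mulVec xA k + t * (xA k * Qmat A α k i)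
          + (if k = i then t * (Qmat A α).mulVec xA k + t ^ 2 * Qmat A α k i else 0) := by
      intro k
      rw [hmv k, hzk k]
      by_cases hk : k = i
      · rw [if_pos hk, if_pos hk, hk, hA0]; ring
      · rw [if_neg hk, if_neg hk]; ring
    calc ∑ k, z k * (Qmat A α).mulVec z k
        = ∑ k, (xA k * (Qmat A α).mulVec xA k + t * (xA k * Qmat A α k i)
            + (if k = i then t * (Qmat A α).mulVec xA k + t ^ 2 * Qmat A α k i else 0)) :=
          Finset.sum_congr rfl (fun k _ => hterm k)
      _ = (∑ k, xA k * (Qmat A α).mulVec xA k) + t * (∑ k, xA k * Qmat A α k i)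
            + (t * (Qmat A α).mulVec xA i + t ^ 2 * Qmat A α i i) := by
          rw [Finset.sum_add_distrib, Finset.sum_add_distrib, ← Finset.mul_sum,
            Finset.sum_ite_eq', if_pos (Finset.mem_univ i)]
      _ = _ := by rw [hsym_sum]; ring
  -- l1 expansion
  have hl1 : l1w A z = l1w A xA + t * Real.sqrt (deg A i) := by
    unfold l1w
    have hterm : ∀ k, Real.sqrt (deg A k) * |z k|
        = Real.sqrt (deg A k) * |xA k|
          + (if k = i then t * Real.sqrt (deg A i) else 0) := by
      intro k
      rw [hzk k]
      by_cases hk : k = i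
      · rw [if_pos hk, if_pos hk, hk, hA0, zero_add, abs_of_pos ht_pos, abs_zero]
        ring
      · rw [if_neg hk, if_neg hk, add_zero, add_zero]
    rw [Finset.sum_congr rfl (fun k _ => hterm k), Finset.sum_add_distrib,
      Finset.sum_ite_eq', if_pos (Finset.mem_univ i)]
  -- seed term
  have hseed : z v = xA v + (if i = v then t else 0) := by
    rw [hzk v]
    by_cases h : v = i
    · rw [if_pos h, if_pos h.symm]
    · rw [if_neg h, if_neg (Ne.symm h)]
  -- Freg expansion
  have hF : Freg A α v ρ z
      = Freg A α v ρ xA + t * c + t ^ 2 / 2 * ((1 + α) / 2) := by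
    unfold Freg fPR
    rw [hquad, hl1, hseed, hQii]
    have hg : gradf A α v xA i
        = (Qmat A α).mulVec xA i - α * (if i = v then 1 / Real.sqrt (deg A v) else 0) := rfl
    rw [hc_def, hg]
    by_cases h : i = v
    · rw [if_pos h, if_pos h]; ring
    · rw [if_neg h, if_neg h]; ring
  -- minimality gives contradiction
  have hmin := hxA z
  rw [hF] at hmin
  have ht2 : t * c = -c ^ 2 := by rw [ht_def]; ring
  have ht3 : t ^ 2 = c ^ 2 := by rw [ht_def]; ring
  nlinarith [sq_nonneg c]
end
end

section
/- Let c ≥ 0 and g_c(x) = cα‖D^{1/2}x‖₁, whose proximal map is coordinatewise soft-thresholding at levels cα√d_i. If z ≥ z' ≥ 0 componentwise, then prox_{g_c}(z − ∇f(z)) ≥ prox_{g_c}(z' − ∇f(z')) componentwise. (Here the step size is 1 = 1/L with L = 1 the smoothness constant of f, so that I − Q is entrywise nonnegative.) -/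
open Finset

noncomputable section

/-- Monotonicity of the proximal-gradient step for PageRank: for
`g_c(x) = cα‖D^{1/2}x‖₁` (soft-thresholding at levels `cα√d_i`) and unit step size,
if `z ≥ z' ≥ 0` componentwise then
`prox_{g_c}(z − ∇f(z)) ≥ prox_{g_c}(z' − ∇f(z'))` componentwise. -/
theorem prox_grad_step_monotone
    {n : ℕ} (A : Matrix (Fin n) (Fin n) ℝ) (hG : IsGraph A)
    (α : ℝ) (hα : 0 < α) (hα1 : α ≤ 1) (v : Fin n)
    (c : ℝ) (hc : 0 ≤ c) :
    ∀ z z' : Fin n → ℝ, (∀ i, 0 ≤ z' i) → (∀ i, z' i ≤ z i) →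
      ∀ i : Fin n,
        softT A (c * α) (fun j => z' j - gradf A α v z' j) i ≤
          softT A (c * α) (fun j => z j - gradf A α v z j) i := by
  intro z z' hz' hle i
  have hA0 : ∀ i j, 0 ≤ A i j := by
    intro i j; rcases hG.zero_one i j with h | h <;> rw [h] <;> norm_num
  have ht : 0 ≤ c * α * Real.sqrt (deg A i) :=
    mul_nonneg (mul_nonneg hc hα.le) (Real.sqrt_nonneg _)
  have hmul : Matrix.mulVec (Qmat A α) z i - Matrix.mulVec (Qmat A α) z' i
      = ∑ j, Qmat A α i j * (z j - z' j) := by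
    simp [Matrix.mulVec, dotProduct, mul_sub, Finset.sum_sub_distrib]
  have hkey : ∑ j, Qmat A α i j * (z j - z' j) ≤ z i - z' i := by
    have h2 : ∑ j, Qmat A α i j * (z j - z' j)
        ≤ ∑ j, (if j = i then z j - z' j else 0) := by
      apply Finset.sum_le_sum
      intro j _
      by_cases hji : j = i
      · subst hji
        simp only [if_pos rfl]
        have hQ : Qmat A α j j = (1 + α) / 2 := by
          simp [Qmat, hG.loopless j]
        rw [hQ]
        exact mul_le_of_le_one_left (sub_nonneg.2 (hle j)) (by linarith)
      · simp only [if_neg hji]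
        have hQ : Qmat A α i j ≤ 0 := by
          have hij : i ≠ j := fun h => hji h.symm
          have : 0 ≤ (1 - α) / 2 * A i j /
              (Real.sqrt (deg A i) * Real.sqrt (deg A j)) :=
            div_nonneg (mul_nonneg (by linarith) (hA0 i j))
              (mul_nonneg (Real.sqrt_nonneg _) (Real.sqrt_nonneg _))
          simp only [Qmat, if_neg hij]
          linarith
        exact mul_nonpos_of_nonpos_of_nonneg hQ (sub_nonneg.2 (hle j))
    rw [Finset.sum_ite_eq' Finset.univ i (fun j => z j - z' j)] at h2
    simpa using h2
  have hw : z' i - gradf A α v z' i ≤ z i - gradf A α v z i := by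
    simp only [gradf]
    have := hmul ▸ hkey
    linarith
  -- monotonicity of soft-thresholding
  set s := c * α * Real.sqrt (deg A i) with hs
  set a := z' i - gradf A α v z' i
  set b := z i - gradf A α v z i
  have haux : ∀ w : ℝ, Real.sign w * max (|w| - s) 0
      = max (w - s) 0 - max (-w - s) 0 := by
    intro w
    rcases lt_trichotomy w 0 with h | h | h
    · rw [Real.sign_of_neg h, abs_of_neg h]
      have h1 : max (w - s) 0 = 0 := max_eq_right (by linarith)
      rw [h1]; ring
    · simp [h]
    · rw [Real.sign_of_pos h, abs_of_pos h]
      have h1 : max (-w - s) 0 = 0 := max_eq_right (by linarith)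
      rw [h1]; ring
  show Real.sign a * max (|a| - s) 0 ≤ Real.sign b * max (|b| - s) 0
  rw [haux a, haux b]
  have h1 : max (a - s) 0 ≤ max (b - s) 0 :=
    max_le_max (by linarith) le_rfl
  have h2 : max (-b - s) 0 ≤ max (-a - s) 0 :=
    max_le_max (by linarith) le_rfl
  linarith
end
end

section
/- Star graph breakpoint: let G be the star on m+1 vertices with center c of degree d_c = m and m leaves of degree 1, seed s = e_c, α ∈ (0,1], and ρ₀ = (1−α)/(2m). For any ρ with max(ρ₀, 0) < ρ < 1/m (and also at ρ = ρ₀ when ρ₀ > 0), the unique minimizer x⋆ of F_ρ has support S⋆ = {c} with x_c⋆ = 2α(1−ρm)/((1+α)√m). Moreover, for every leaf ℓ (of degree d_ℓ = 1), with λ_ℓ = αρ, the degree-normalized KKT slack equals γ_ℓ = λ_ℓ − |∇_ℓ f(x⋆)| = (2α/(1+α))·(ρ − ρ₀); in particular at the breakpoint ρ = ρ₀ one has min_{i ∉ S⋆} γ_i = 0. -/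
open Finset

noncomputable section

/-- Adjacency matrix of the star graph on `m+1` vertices with center `0`. -/
def starA (m : ℕ) : Matrix (Fin (m + 1)) (Fin (m + 1)) ℝ :=
  fun i j => if (i = 0 ∧ j ≠ 0) ∨ (j = 0 ∧ i ≠ 0) then 1 else 0

/-!
Since the normalized Laplacian is positive semidefinite (AM–GM on every edge), `Q ⪰ αI`, so
expanding the quadratic `f` around a KKT point `x` gives `F_ρ(z) ≥ F_ρ(x) + (α/2)‖z − x‖²`:
a KKT point is the unique minimizer. On the star, the center equation `∇_c f = −αρ√m` forces
the value of `x_c`, and the leaf gradients `−(1−α)x_c/(2√m)` have modulus at most `αρ` exactly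
when `ρ ≥ ρ₀`; their slack is linear in `ρ − ρ₀`.
-/

open Matrix

section General

variable {n : ℕ} {A : Matrix (Fin n) (Fin n) ℝ} {α : ℝ}

lemma Qmat_isSymm (hA : A.IsSymm) : (Qmat A α).IsSymm := by
  ext i j
  simp only [transpose_apply, Qmat, hA.apply i j, eq_comm (a := j), mul_comm (Real.sqrt (deg A j))]

lemma sum_adj_mul_mul_le (hA : A.IsSymm) (hA0 : ∀ i j, 0 ≤ A i j) (u : Fin n → ℝ) :
    ∑ i, ∑ j, A i j * u i * u j ≤ ∑ i, deg A i * u i ^ 2 := by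
  have hswap : ∑ i, ∑ j, A i j * u j ^ 2 = ∑ i, ∑ j, A i j * u i ^ 2 := by
    rw [sum_comm]
    simp only [hA.apply]
  have hdeg_sum : ∑ i, deg A i * u i ^ 2 = ∑ i, ∑ j, A i j * (u i ^ 2 + u j ^ 2) / 2 := by
    simp only [mul_add, add_div, sum_add_distrib, ← sum_div, hswap,
      deg, sum_mul]
    ring
  rw [hdeg_sum]
  gcongr with i _ j _
  nlinarith [mul_nonneg (hA0 i j) (sq_nonneg (u i - u j))]

lemma mul_sum_sq_le_dotProduct_Qmat_mulVec (hA : A.IsSymm) (hA0 : ∀ i j, 0 ≤ A i j)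
    (hdeg : ∀ i, 0 < deg A i) (hα1 : α ≤ 1) (y : Fin n → ℝ) :
    α * ∑ i, y i ^ 2 ≤ y ⬝ᵥ Qmat A α *ᵥ y := by
  set u : Fin n → ℝ := fun i => y i / Real.sqrt (deg A i)
  have hQ : y ⬝ᵥ Qmat A α *ᵥ y
      = (1 + α) / 2 * ∑ i, y i ^ 2 - (1 - α) / 2 * ∑ i, ∑ j, A i j * u i * u j := by
    simp only [dotProduct, mulVec, Qmat, sub_mul, ite_mul, zero_mul, sum_sub_distrib,
      sum_ite_eq, mem_univ, if_true, mul_sub, mul_sum, u]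
    congr 1
    · exact sum_congr rfl fun i _ => by ring
    · refine sum_congr rfl fun i _ => sum_congr rfl fun j _ => ?_
      field_simp
  have hu : ∑ i, deg A i * u i ^ 2 = ∑ i, y i ^ 2 := by
    refine sum_congr rfl fun i _ => ?_
    rw [div_pow, Real.sq_sqrt (hdeg i).le]
    field_simp [(hdeg i).ne']
  have hL := sum_adj_mul_mul_le hA hA0 u
  rw [hu] at hL
  rw [hQ]
  nlinarith

lemma fPR_eq_add_gradf_dotProduct (hQ : (Qmat A α).IsSymm) (v : Fin n) (x z : Fin n → ℝ) :
    fPR A α v z = fPR A α v x + gradf A α v x ⬝ᵥ (z - x)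
      + 1 / 2 * ((z - x) ⬝ᵥ Qmat A α *ᵥ (z - x)) := by
  have hcomm : x ⬝ᵥ Qmat A α *ᵥ (z - x) = (Qmat A α *ᵥ x) ⬝ᵥ (z - x) := by
    rw [dotProduct_mulVec, ← hQ, vecMul_transpose, hQ]
  have hgrad : gradf A α v x ⬝ᵥ (z - x)
      = (Qmat A α *ᵥ x) ⬝ᵥ (z - x) - α * ((z v - x v) / Real.sqrt (deg A v)) := by
    simp only [gradf, dotProduct, sub_mul, sum_sub_distrib, mul_ite, mul_zero, ite_mul,
      zero_mul, sum_ite_eq', mem_univ, if_true, Pi.sub_apply]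
    ring
  have hz : z = x + (z - x) := (add_sub_cancel x z).symm
  change (1 / 2) * (z ⬝ᵥ Qmat A α *ᵥ z) - α * (z v / Real.sqrt (deg A v))
    = (1 / 2) * (x ⬝ᵥ Qmat A α *ᵥ x) - α * (x v / Real.sqrt (deg A v)) + _ + _
  rw [hgrad]
  conv_lhs => rw [hz]
  rw [mulVec_add, dotProduct_add, add_dotProduct, add_dotProduct, hcomm, dotProduct_comm (z - x)]
  simp only [Pi.add_apply, Pi.sub_apply]
  ring

-- The subgradient optimality condition `-∇ᵢf(x) ∈ αρ√dᵢ · ∂|xᵢ|`, written without case split.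
def IsKKTPoint (A : Matrix (Fin n) (Fin n) ℝ) (α : ℝ) (v : Fin n) (ρ : ℝ) (x : Fin n → ℝ) :
    Prop :=
  ∀ i, |gradf A α v x i| ≤ α * ρ * Real.sqrt (deg A i) ∧
    gradf A α v x i * x i = -(α * ρ * Real.sqrt (deg A i) * |x i|)

lemma mul_sub_add_mul_abs_sub_nonneg {g l a t : ℝ} (hg : |g| ≤ l) (hga : g * a = -(l * |a|)) :
    0 ≤ g * (t - a) + l * (|t| - |a|) := by
  have hgt : -(l * |t|) ≤ g * t := by
    nlinarith [neg_abs_le (g * t), abs_mul g t, mul_le_mul_of_nonneg_right hg (abs_nonneg t)]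
  linarith

theorem Freg_add_sq_le_of_isKKTPoint (hA : A.IsSymm) (hA0 : ∀ i j, 0 ≤ A i j)
    (hdeg : ∀ i, 0 < deg A i) (hα1 : α ≤ 1) {v : Fin n} {ρ : ℝ} {x : Fin n → ℝ}
    (hx : IsKKTPoint A α v ρ x) (z : Fin n → ℝ) :
    Freg A α v ρ x + α / 2 * ∑ i, (z i - x i) ^ 2 ≤ Freg A α v ρ z := by
  have hquad := mul_sum_sq_le_dotProduct_Qmat_mulVec hA hA0 hdeg hα1 (z - x)
  have hlin : 0 ≤ ∑ i, (gradf A α v x i * (z i - x i)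
      + α * ρ * Real.sqrt (deg A i) * (|z i| - |x i|)) :=
    sum_nonneg fun i _ => mul_sub_add_mul_abs_sub_nonneg (hx i).1 (hx i).2
  have hsplit : ∑ i, (gradf A α v x i * (z i - x i)
      + α * ρ * Real.sqrt (deg A i) * (|z i| - |x i|))
      = gradf A α v x ⬝ᵥ (z - x) + α * ρ * l1w A z - α * ρ * l1w A x := by
    simp only [dotProduct, l1w, Pi.sub_apply, sum_add_distrib, mul_sum, mul_sub,
      sum_sub_distrib, mul_assoc]
    ring
  simp only [Pi.sub_apply] at hquad
  rw [Freg, Freg, fPR_eq_add_gradf_dotProduct (Qmat_isSymm hA) v x z]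
  linarith

theorem eq_of_isKKTPoint (hA : A.IsSymm) (hA0 : ∀ i j, 0 ≤ A i j) (hdeg : ∀ i, 0 < deg A i)
    (hα : 0 < α) (hα1 : α ≤ 1) {v : Fin n} {ρ : ℝ} {x y : Fin n → ℝ}
    (hx : IsKKTPoint A α v ρ x) (hy : ∀ z, Freg A α v ρ y ≤ Freg A α v ρ z) : y = x := by
  have hle := (Freg_add_sq_le_of_isKKTPoint hA hA0 hdeg hα1 hx y).trans (hy x)
  have hsum : ∑ i, (y i - x i) ^ 2 = 0 :=
    le_antisymm (by nlinarith) (sum_nonneg fun i _ => sq_nonneg _)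
  funext i
  have hi := (sum_eq_zero_iff_of_nonneg fun i _ => sq_nonneg (y i - x i)).mp hsum i (mem_univ i)
  exact sub_eq_zero.mp (pow_eq_zero_iff two_ne_zero |>.mp hi)

end General

section Star

variable {m : ℕ} {α ρ : ℝ}

lemma starA_isSymm : (starA m).IsSymm := by
  ext i j
  simp only [transpose_apply, starA, or_comm]

lemma starA_nonneg (i j : Fin (m + 1)) : 0 ≤ starA m i j := by
  unfold starA; split_ifs <;> norm_num

lemma deg_starA_zero : deg (starA m) 0 = m := by
  simp [deg, starA, Fin.sum_univ_succ, Fin.succ_ne_zero]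

lemma deg_starA_succ (i : Fin m) : deg (starA m) i.succ = 1 := by
  simp [deg, starA, Fin.succ_ne_zero]

lemma deg_starA_pos (hm : 0 < m) (i : Fin (m + 1)) : 0 < deg (starA m) i := by
  cases i using Fin.cases with
  | zero => rw [deg_starA_zero]; exact_mod_cast hm
  | succ i => rw [deg_starA_succ]; exact one_pos

lemma gradf_starA_single_zero (c : ℝ) :
    gradf (starA m) α 0 (Pi.single 0 c) 0 = (1 + α) / 2 * c - α / Real.sqrt m := by
  simp [gradf, mulVec_single, Qmat, starA, deg_starA_zero]
  ring

lemma gradf_starA_single_succ (c : ℝ) (i : Fin m) :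
    gradf (starA m) α 0 (Pi.single 0 c) i.succ = -((1 - α) / (2 * Real.sqrt m) * c) := by
  simp [gradf, mulVec_single, Qmat, starA, deg_starA_zero, deg_starA_succ, Fin.succ_ne_zero,
    div_div]

def starCenterValue (m : ℕ) (α ρ : ℝ) : ℝ := 2 * α * (1 - ρ * m) / ((1 + α) * Real.sqrt m)

lemma starCenterValue_pos (hm : 0 < m) (hα : 0 < α) (hρ : ρ < 1 / m) :
    0 < starCenterValue m α ρ := by
  have hm' : (0 : ℝ) < m := by exact_mod_cast hm
  have hρm : ρ * m < 1 := by rwa [lt_div_iff₀ hm'] at hρ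
  unfold starCenterValue
  apply div_pos <;> [nlinarith; positivity]

lemma gradf_starA_center (hm : 0 < m) (hα : 0 < α) :
    gradf (starA m) α 0 (Pi.single 0 (starCenterValue m α ρ)) 0
      = -(α * ρ * Real.sqrt m) := by
  have hsm : 0 < Real.sqrt m := Real.sqrt_pos.mpr (by exact_mod_cast hm)
  have hsq : Real.sqrt m ^ 2 = m := Real.sq_sqrt (Nat.cast_nonneg m)
  rw [gradf_starA_single_zero, starCenterValue]
  field_simp
  linear_combination ρ * hsq

lemma abs_gradf_starA_leaf (hm : 0 < m) (hα : 0 < α) (hα1 : α ≤ 1) (hρ : ρ < 1 / m)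
    (i : Fin m) :
    |gradf (starA m) α 0 (Pi.single 0 (starCenterValue m α ρ)) i.succ|
      = α * ρ - 2 * α / (1 + α) * (ρ - (1 - α) / (2 * m)) := by
  have hm' : (0 : ℝ) < m := by exact_mod_cast hm
  have hsm : 0 < Real.sqrt m := Real.sqrt_pos.mpr hm'
  have hsq : Real.sqrt m ^ 2 = m := Real.sq_sqrt hm'.le
  rw [gradf_starA_single_succ, abs_neg, abs_of_nonneg (mul_nonneg (by
    have : 0 ≤ 1 - α := by linarith
    positivity) (starCenterValue_pos hm hα hρ).le), starCenterValue]
  field_simp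
  linear_combination (1 - α) * (ρ * m - 1) * hsq

lemma isKKTPoint_starA (hm : 0 < m) (hα : 0 < α) (hα1 : α ≤ 1)
    (hρlb : (1 - α) / (2 * m) ≤ ρ) (hρub : ρ < 1 / m) :
    IsKKTPoint (starA m) α 0 ρ (Pi.single 0 (starCenterValue m α ρ)) := by
  have hρ : 0 ≤ ρ := le_trans (div_nonneg (by linarith) (by positivity)) hρlb
  intro i
  cases i using Fin.cases with
  | zero =>
    rw [gradf_starA_center hm hα, deg_starA_zero, abs_neg, Pi.single_eq_same,
      abs_of_pos (starCenterValue_pos hm hα hρub), abs_of_nonneg (by positivity)]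
    exact ⟨le_rfl, by ring⟩
  | succ i =>
    rw [abs_gradf_starA_leaf hm hα hα1 hρub, deg_starA_succ, Real.sqrt_one,
      Pi.single_eq_of_ne (Fin.succ_ne_zero i)]
    refine ⟨?_, by simp⟩
    have : 0 ≤ 2 * α / (1 + α) * (ρ - (1 - α) / (2 * m)) :=
      mul_nonneg (by positivity) (by linarith)
    linarith

end Star

theorem star_graph_breakpoint_general
    (m : ℕ) (hm : 1 ≤ m)
    (α ρ ρ₀ : ℝ) (hα : 0 < α) (hα1 : α ≤ 1)
    (hρ₀ : ρ₀ = (1 - α) / (2 * m))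
    (hρlb : ρ₀ ≤ ρ) (hρub : ρ < 1 / m)
    (xs : Fin (m + 1) → ℝ)
    (hxs : ∀ z, Freg (starA m) α 0 ρ xs ≤ Freg (starA m) α 0 ρ z) :
    Function.support xs = {0} ∧
    xs 0 = 2 * α * (1 - ρ * m) / ((1 + α) * Real.sqrt m) ∧
    (∀ ℓ : Fin (m + 1), ℓ ≠ 0 →
      α * ρ - |gradf (starA m) α 0 xs ℓ| = 2 * α / (1 + α) * (ρ - ρ₀)) ∧
    (ρ = ρ₀ → ∀ ℓ : Fin (m + 1), ℓ ≠ 0 → α * ρ - |gradf (starA m) α 0 xs ℓ| = 0) := by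
  subst hρ₀
  obtain rfl : xs = Pi.single 0 (starCenterValue m α ρ) :=
    eq_of_isKKTPoint starA_isSymm starA_nonneg (deg_starA_pos hm) hα hα1
      (isKKTPoint_starA hm hα hα1 hρlb hρub) hxs
  have hslack : ∀ ℓ : Fin (m + 1), ℓ ≠ 0 →
      α * ρ - |gradf (starA m) α 0 (Pi.single 0 (starCenterValue m α ρ)) ℓ|
        = 2 * α / (1 + α) * (ρ - (1 - α) / (2 * m)) := by
    intro ℓ hℓ
    obtain ⟨i, rfl⟩ := Fin.eq_succ_of_ne_zero hℓ
    rw [abs_gradf_starA_leaf hm hα hα1 hρub]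
    ring
  refine ⟨Pi.support_single_of_ne (starCenterValue_pos hm hα hρub).ne', Pi.single_eq_same _ _,
    hslack, fun hρ ℓ hℓ => ?_⟩
  rw [hslack ℓ hℓ, ← hρ, sub_self, mul_zero]

/-- Star-graph breakpoint: for the star on `m+1` vertices with center `c = 0`
(degree `m`) and seed `e_c`, `α ∈ (0,1]`, `ρ₀ = (1−α)/(2m)`, and `ρ` with
`max(ρ₀,0) < ρ < 1/m` or `ρ = ρ₀ > 0` (equivalently `0 < ρ`, `ρ₀ ≤ ρ < 1/m`),
the unique minimizer `x⋆` of `F_ρ` has support `{c}` with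
`x_c⋆ = 2α(1−ρm)/((1+α)√m)`, and for every leaf `ℓ` the degree-normalized KKT slack is
`γ_ℓ = αρ − |∇_ℓ f(x⋆)| = (2α/(1+α))·(ρ − ρ₀)`; in particular at `ρ = ρ₀` all the slacks
of inactive coordinates are `0`. -/
theorem star_graph_breakpoint
    (m : ℕ) (hm : 1 ≤ m)
    (α ρ ρ₀ : ℝ) (hα : 0 < α) (hα1 : α ≤ 1)
    (hρ₀ : ρ₀ = (1 - α) / (2 * m))
    (hρpos : 0 < ρ) (hρlb : ρ₀ ≤ ρ) (hρub : ρ < 1 / m)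
    (xs : Fin (m + 1) → ℝ)
    (hxs : ∀ z, Freg (starA m) α 0 ρ xs ≤ Freg (starA m) α 0 ρ z) :
    Function.support xs = {0} ∧
    xs 0 = 2 * α * (1 - ρ * m) / ((1 + α) * Real.sqrt m) ∧
    (∀ ℓ : Fin (m + 1), ℓ ≠ 0 →
      α * ρ - |gradf (starA m) α 0 xs ℓ| = 2 * α / (1 + α) * (ρ - ρ₀)) ∧
    (ρ = ρ₀ → ∀ ℓ : Fin (m + 1), ℓ ≠ 0 → α * ρ - |gradf (starA m) α 0 xs ℓ| = 0) :=
  star_graph_breakpoint_general m hm α ρ ρ₀ hα hα1 hρ₀ hρlb hρub xs hxs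
end
end

section
/- Let α ∈ (0,1) and let S be a vertex set with S_B ⊆ S, with vertex boundary ∂S, exterior Ext(S) = V ∖ (S ∪ ∂S), and d_min∂S = min_{j∈∂S} d_j. Suppose that for all i ∈ Ext(S): |N({i}) ∩ ∂S| / d_i ≤ (αρ/(2(1−α)))² · d_i · d_min∂S. Let y ∈ ℝ^n satisfy supp(y) ⊆ S ∪ ∂S and ‖y‖₂ ≤ √20 + 1. Then for every i ∈ Ext(S), the forward-gradient map u(y) = y − ∇f(y) satisfies |u(y)_i| ≤ 2αρ√d_i, and consequently prox_{g_B}(u(y))_i = 0. -/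
open Finset

noncomputable section

/-- Euclidean norm on `Fin n → ℝ`. -/
def enorm2 {n : ℕ} (x : Fin n → ℝ) : ℝ := Real.sqrt (∑ i, (x i) ^ 2)

/-! Let `i` be exterior to `S`. Then `i ≠ v` and `y_i = 0`, so
`u(y)_i = ((1-α)/2) ∑_j A_ij y_j / √(d_i d_j)`, and the only nonzero terms come from
neighbours `j` of `i` in `∂S`, each with `1/√d_j ≤ 1/√(d_min∂S)`. Cauchy–Schwarz over these
`|N(i) ∩ ∂S|` terms gives `|u(y)_i| ≤ ((1-α)/2) √(|N(i) ∩ ∂S| / (d_i d_min∂S)) ‖y‖₂`, which the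
exposure condition bounds by `(αρ/4) √d_i ‖y‖₂ ≤ 2αρ√d_i` since `‖y‖₂ ≤ 8`. -/

section ForwardStep

variable {n : ℕ} (A : Matrix (Fin n) (Fin n) ℝ)

theorem softT_apply_eq_zero_of_abs_le {t : ℝ} {w : Fin n → ℝ} {i : Fin n}
    (h : |w i| ≤ t * Real.sqrt (deg A i)) : softT A t w i = 0 := by
  simp only [softT, max_eq_right (sub_nonpos.2 h), mul_zero]

theorem sub_gradf_apply_of_ne_of_eq_zero (α : ℝ) {v i : Fin n} {y : Fin n → ℝ}
    (hiv : i ≠ v) (hyi : y i = 0) :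
    y i - gradf A α v y i =
      (1 - α) / 2 * ∑ j, A i j / (Real.sqrt (deg A i) * Real.sqrt (deg A j)) * y j := by
  simp only [gradf, Qmat, Matrix.mulVec, dotProduct, if_neg hiv, mul_zero, sub_zero, sub_mul,
    Finset.sum_sub_distrib, ite_mul, zero_mul, Finset.sum_ite_eq, if_pos (Finset.mem_univ i),
    hyi, zero_sub, neg_neg, Finset.mul_sum]
  exact Finset.sum_congr rfl fun j _ => by ring

theorem notMem_of_adj_of_notMem_bdry {S : Set (Fin n)} {i j : Fin n} (hiS : i ∉ S)
    (hib : i ∉ bdry A S) (hij : A i j ≠ 0) : j ∉ S :=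
  fun hjS => hib ⟨hiS, j, hjS, hij⟩

end ForwardStep

theorem sum_abs_le_sqrt_card_mul_enorm2 {n : ℕ} (T : Finset (Fin n)) (y : Fin n → ℝ) :
    ∑ j ∈ T, |y j| ≤ Real.sqrt T.card * enorm2 y := by
  have hsq : ∑ j ∈ T, |y j| ^ 2 ≤ ∑ j, y j ^ 2 := by
    simp_rw [sq_abs]
    exact Finset.sum_le_sum_of_subset_of_nonneg (Finset.subset_univ T) fun j _ _ => sq_nonneg _
  rw [enorm2, ← Real.sqrt_mul (Nat.cast_nonneg _)]
  refine Real.le_sqrt_of_sq_le ?_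
  calc (∑ j ∈ T, |y j|) ^ 2 ≤ T.card * ∑ j ∈ T, |y j| ^ 2 := sq_sum_le_card_mul_sum_sq
    _ ≤ T.card * ∑ j, y j ^ 2 := by gcongr

theorem sInf_deg_image_pos {n : ℕ} {A : Matrix (Fin n) (Fin n) ℝ} (hG : IsGraph A)
    {B : Set (Fin n)} (hB : B.Nonempty) : 0 < sInf (deg A '' B) := by
  obtain ⟨j, -, hj⟩ := (hB.image (deg A)).csInf_mem (B.toFinite.image _)
  exact hj ▸ hG.deg_pos j

theorem sInf_deg_image_le {n : ℕ} (A : Matrix (Fin n) (Fin n) ℝ) {B : Set (Fin n)} {j : Fin n}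
    (hj : j ∈ B) : sInf (deg A '' B) ≤ deg A j :=
  csInf_le (B.toFinite.image _).bddBelow ⟨j, hj, rfl⟩

theorem abs_sum_normalizedAdj_le {n : ℕ} {A : Matrix (Fin n) (Fin n) ℝ} {i : Fin n}
    (h01 : ∀ j, A i j = 0 ∨ A i j = 1) {B : Set (Fin n)} {m K : ℝ} (hm : 0 < m)
    (hmB : ∀ j ∈ B, m ≤ deg A j) (hK : 0 ≤ K)
    (hcard : ((nbr A i ∩ B).ncard : ℝ) ≤ K ^ 2 * m) {y : Fin n → ℝ}
    (hyB : ∀ j, A i j ≠ 0 → y j ≠ 0 → j ∈ B) :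
    |∑ j, A i j / (Real.sqrt (deg A i) * Real.sqrt (deg A j)) * y j| ≤
      K * enorm2 y / Real.sqrt (deg A i) := by
  classical
  set T := Finset.univ.filter (fun j => A i j ≠ 0 ∧ j ∈ B)
  have hT : (T : Set (Fin n)) = nbr A i ∩ B := by ext j; simp [T, nbr]
  have hsm : 0 < Real.sqrt m := Real.sqrt_pos.2 hm
  have hterm : ∀ j ∈ T, |A i j / (Real.sqrt (deg A i) * Real.sqrt (deg A j)) * y j| ≤
      |y j| / Real.sqrt m / Real.sqrt (deg A i) := by
    intro j hj
    obtain ⟨hA, hjB⟩ := (Finset.mem_filter.1 hj).2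
    have hmj : Real.sqrt m ≤ Real.sqrt (deg A j) := Real.sqrt_le_sqrt (hmB j hjB)
    rw [(h01 j).resolve_left hA, abs_mul, abs_div, abs_one, abs_of_nonneg (by positivity),
      one_div_mul_eq_div, mul_comm, ← div_div]
    gcongr
  have hsqrt_card : Real.sqrt T.card ≤ K * Real.sqrt m := by
    rw [← Real.sqrt_sq hK, ← Real.sqrt_mul (sq_nonneg K)]
    exact Real.sqrt_le_sqrt (by rwa [← Set.ncard_coe_finset, hT])
  calc |∑ j, A i j / (Real.sqrt (deg A i) * Real.sqrt (deg A j)) * y j|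
      = |∑ j ∈ T, A i j / (Real.sqrt (deg A i) * Real.sqrt (deg A j)) * y j| := by
        rw [Finset.sum_filter_of_ne]
        intro j _ hj
        refine ⟨fun hA => hj (by simp [hA]), hyB j (fun hA => hj (by simp [hA])) ?_⟩
        exact fun hy => hj (by simp [hy])
    _ ≤ ∑ j ∈ T, |y j| / Real.sqrt m / Real.sqrt (deg A i) :=
        (Finset.abs_sum_le_sum_abs _ _).trans (Finset.sum_le_sum hterm)
    _ ≤ Real.sqrt T.card * enorm2 y / Real.sqrt m / Real.sqrt (deg A i) := by
        simp only [← Finset.sum_div]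
        gcongr
        exact sum_abs_le_sqrt_card_mul_enorm2 T y
    _ ≤ K * Real.sqrt m * enorm2 y / Real.sqrt m / Real.sqrt (deg A i) := by
        gcongr
        exact Real.sqrt_nonneg _
    _ = K * enorm2 y / Real.sqrt (deg A i) := by
        rw [mul_right_comm, mul_div_cancel_right₀ _ hsm.ne']

theorem abs_sum_normalizedAdj_le_of_exposure {n : ℕ} {A : Matrix (Fin n) (Fin n) ℝ}
    (hG : IsGraph A) {i : Fin n} {B : Set (Fin n)} {c : ℝ} (hc : 0 ≤ c)
    (hexp : ((nbr A i ∩ B).ncard : ℝ) / deg A i ≤ c ^ 2 * deg A i * sInf (deg A '' B))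
    {y : Fin n → ℝ} (hyB : ∀ j, A i j ≠ 0 → y j ≠ 0 → j ∈ B) :
    |∑ j, A i j / (Real.sqrt (deg A i) * Real.sqrt (deg A j)) * y j| ≤
      c * deg A i * enorm2 y / Real.sqrt (deg A i) := by
  have hcd : 0 ≤ c * deg A i := mul_nonneg hc (hG.deg_pos i).le
  rcases B.eq_empty_or_nonempty with rfl | hB
  -- `sInf ∅ = 0` makes `hexp` useless, but then the sum is empty anyway.
  · exact abs_sum_normalizedAdj_le (hG.zero_one i) one_pos (by simp) hcd (by simp [sq_nonneg]) hyB
  · refine abs_sum_normalizedAdj_le (hG.zero_one i) (sInf_deg_image_pos hG hB)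
      (fun j hj => sInf_deg_image_le A hj) hcd ?_ hyB
    rw [div_le_iff₀ (hG.deg_pos i)] at hexp
    linarith

theorem exterior_coordinate_stays_zero_general
    {n : ℕ} (A : Matrix (Fin n) (Fin n) ℝ) (hG : IsGraph A)
    (α ρ : ℝ) (hα : 0 < α) (hα1 : α < 1) (hρ : 0 < ρ) (v : Fin n)
    (xB : Fin n → ℝ)
    (S : Set (Fin n))
    (hSB : Function.support xB ⊆ S)
    (hseed : xB v ≠ 0)
    (hexp : ∀ i : Fin n, i ∉ S ∪ bdry A S →
      ((nbr A i ∩ bdry A S).ncard : ℝ) / deg A i ≤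
        (α * ρ / (2 * (1 - α))) ^ 2 * deg A i * sInf (deg A '' bdry A S))
    (yv : Fin n → ℝ)
    (hsupp : Function.support yv ⊆ S ∪ bdry A S)
    (hnorm : enorm2 yv ≤ Real.sqrt 20 + 1) :
    ∀ i : Fin n, i ∉ S ∪ bdry A S →
      |yv i - gradf A α v yv i| ≤ 2 * α * ρ * Real.sqrt (deg A i) ∧
      softT A (2 * α * ρ) (fun j => yv j - gradf A α v yv j) i = 0 := by
  intro i hi
  have hiS : i ∉ S := fun h => hi (Or.inl h)
  have hiv : i ≠ v := fun h => hiS (h ▸ hSB hseed)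
  have hyB : ∀ j, A i j ≠ 0 → yv j ≠ 0 → j ∈ bdry A S := fun j hA hy =>
    (hsupp hy).resolve_left (notMem_of_adj_of_notMem_bdry A hiS (fun h => hi (Or.inr h)) hA)
  have hY : enorm2 yv ≤ 8 := by
    have : Real.sqrt 20 ≤ 7 := Real.sqrt_le_iff.2 ⟨by norm_num, by norm_num⟩
    linarith
  have hbound : |yv i - gradf A α v yv i| ≤ 2 * α * ρ * Real.sqrt (deg A i) := by
    rw [sub_gradf_apply_of_ne_of_eq_zero A α hiv (Function.notMem_support.1 fun h => hi (hsupp h)),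
      abs_mul, abs_of_pos (by linarith : 0 < (1 - α) / 2)]
    calc (1 - α) / 2 * |_|
        ≤ (1 - α) / 2 * (α * ρ / (2 * (1 - α)) * deg A i * enorm2 yv / Real.sqrt (deg A i)) := by
          gcongr
          exact abs_sum_normalizedAdj_le_of_exposure hG
            (div_nonneg (by positivity) (by linarith)) (hexp i hi) hyB
      _ = α * ρ / 4 * Real.sqrt (deg A i) * enorm2 yv := by
          have h1α : 1 - α ≠ 0 := by linarith
          have hsd : Real.sqrt (deg A i) ≠ 0 := (Real.sqrt_pos.2 (hG.deg_pos i)).ne'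
          field_simp
          rw [Real.sq_sqrt (hG.deg_pos i).le]
          ring
      _ ≤ α * ρ / 4 * Real.sqrt (deg A i) * 8 := by gcongr
      _ = 2 * α * ρ * Real.sqrt (deg A i) := by ring
  exact ⟨hbound, softT_apply_eq_zero_of_abs_le A hbound⟩

/-- Single-step no-percolation: let `α ∈ (0,1)`, `S ⊇ S_B` (the seed lies in
`S_B ⊆ S`), with exposure condition `|N({i}) ∩ ∂S|/d_i ≤ (αρ/(2(1−α)))²·d_i·d_min∂S` for
all exterior `i`. If `supp(y) ⊆ S ∪ ∂S` and `‖y‖₂ ≤ √20 + 1`, then for every exterior `i`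
the forward-gradient map `u(y) = y − ∇f(y)` satisfies `|u(y)_i| ≤ 2αρ√d_i`, and hence
`prox_{g_B}(u(y))_i = 0`. -/
theorem exterior_coordinate_stays_zero
    {n : ℕ} (A : Matrix (Fin n) (Fin n) ℝ) (hG : IsGraph A)
    (α ρ : ℝ) (hα : 0 < α) (hα1 : α < 1) (hρ : 0 < ρ) (v : Fin n)
    (xB : Fin n → ℝ)
    (hxB : ∀ z, Freg A α v (2 * ρ) xB ≤ Freg A α v (2 * ρ) z)
    (S : Set (Fin n))
    (hSB : Function.support xB ⊆ S)
    (hseed : xB v ≠ 0)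
    (hexp : ∀ i : Fin n, i ∉ S ∪ bdry A S →
      ((nbr A i ∩ bdry A S).ncard : ℝ) / deg A i ≤
        (α * ρ / (2 * (1 - α))) ^ 2 * deg A i * sInf (deg A '' bdry A S))
    (yv : Fin n → ℝ)
    (hsupp : Function.support yv ⊆ S ∪ bdry A S)
    (hnorm : enorm2 yv ≤ Real.sqrt 20 + 1) :
    ∀ i : Fin n, i ∉ S ∪ bdry A S →
      |yv i - gradf A α v yv i| ≤ 2 * α * ρ * Real.sqrt (deg A i) ∧
      softT A (2 * α * ρ) (fun j => yv j - gradf A α v yv j) i = 0 :=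
  exterior_coordinate_stays_zero_general A hG α ρ hα hα1 hρ v xB S hSB hseed hexp yv hsupp hnorm
end
end
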